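/- Let G and H be non-empty locally finite graphs. If the neighborhood complexes N(G) and N(H) are isomorphic as abstract simplicial complexes, then there is a ×-homotopy equivalence K_2 × G → K_2 × H. -/

import Mathlib

/-- A graph: a vertex type with a symmetric edge relation (loops allowed). -/
structure XGraph where
  V : Type
  E : V → V → Prop
  symm : ∀ ⦃x y⦄, E x y → E y x

/-- Graph homomorphisms. -/
def XGraph.Hom (G H : XGraph) : Type :=
  {f : G.V → H.V // ∀ ⦃x y⦄, G.E x y → H.E (f x) (f y)}

/-- Graph isomorphisms: bijective homomorphisms whose inverse is a homomorphism. -/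
structure XGraph.Iso (G H : XGraph) extends G.V ≃ H.V where
  edge_iff : ∀ x y, G.E x y ↔ H.E (toEquiv x) (toEquiv y)

/-- The complete graph `K₂` on two vertices. -/
def K2 : XGraph := ⟨Fin 2, fun x y => x ≠ y, fun _ _ h => h.symm⟩

/-- The tensor (categorical) product of graphs. -/
def XGraph.tensor (G H : XGraph) : XGraph :=
  ⟨G.V × H.V, fun p q => G.E p.1 q.1 ∧ H.E p.2 q.2,
   fun _ _ h => ⟨G.symm h.1, H.symm h.2⟩⟩

/-- No isolated vertices. -/
def XGraph.NoIsolated (G : XGraph) : Prop := ∀ x, ∃ y, G.E x y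

/-- An abstract simplicial complex, given by its vertex type and its simplices
(nonempty finite vertex sets). -/
structure SComplex where
  V : Type
  S : Finset V → Prop

/-- Isomorphism of abstract simplicial complexes: a bijection of vertex sets under
which a finite set is a simplex iff its image is a simplex. -/
def SComplex.Iso (A B : SComplex) : Prop :=
  ∃ e : A.V ≃ B.V, ∀ s : Finset A.V, A.S s ↔ B.S (s.map e.toEmbedding)

/-- The neighborhood complex `N(G)`: vertices are the non-isolated vertices of `G`,
simplices the nonempty finite sets contained in the neighborhood of some vertex. -/
def XGraph.NC (G : XGraph) : SComplex where
  V := {x : G.V // ∃ y, G.E x y}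
  S s := s.Nonempty ∧ ∃ v : G.V, ∀ x ∈ s, G.E v x.val

/-- The graph `Iₙ`: vertices `{0, …, n}`, with `x ~ y` iff `|x - y| ≤ 1` (loops at
every vertex). -/
def Igraph (n : ℕ) : XGraph :=
  ⟨Fin (n + 1), fun x y => (x : ℕ) ≤ (y : ℕ) + 1 ∧ (y : ℕ) ≤ (x : ℕ) + 1,
   fun _ _ h => ⟨h.2, h.1⟩⟩

/-- `f` and `g` are ×-homotopic: there are `n` and a homomorphism `K : G × Iₙ → H`
with `K(x,0) = f(x)` and `K(x,n) = g(x)`. -/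
def XHomotopic {G H : XGraph} (f g : G.Hom H) : Prop :=
  ∃ n : ℕ, ∃ K : (G.tensor (Igraph n)).Hom H,
    ∀ x : G.V, K.1 ((x, 0) : G.V × Fin (n + 1)) = f.1 x ∧
      K.1 ((x, Fin.last n) : G.V × Fin (n + 1)) = g.1 x

/-- The identity homomorphism. -/
def XGraph.Hom.id (G : XGraph) : G.Hom G := ⟨fun x => x, fun _ _ h => h⟩

/-- Composition of graph homomorphisms. -/
def XGraph.Hom.comp {F G H : XGraph} (g : G.Hom H) (f : F.Hom G) : F.Hom H :=
  ⟨g.1 ∘ f.1, fun _ _ h => g.2 (f.2 h)⟩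

/-- `f : G → H` is a ×-homotopy equivalence if it has a ×-homotopy inverse. -/
def IsXHtpyEquiv {G H : XGraph} (f : G.Hom H) : Prop :=
  ∃ h : H.Hom G, XHomotopic (h.comp f) (XGraph.Hom.id G) ∧
    XHomotopic (f.comp h) (XGraph.Hom.id H)

/-! A simplicial map `e : N(G) → N(H)` gives a homomorphism `K₂ × G → K₂ × H`: on the sheet `0`
send `x ↦ e x`, on the sheet `1` send `y` to a vertex whose neighbourhood contains the image of the
(finite, hence simplex) neighbourhood `N(y)`. For the two maps coming from `e` and `e⁻¹`, both
composites move every vertex `x` to a vertex whose neighbourhood contains `N(x)`, and any such map is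
×-homotopic to the identity in one step. -/

theorem XHomotopic.of_adj {G H : XGraph} (f g : G.Hom H)
    (hfg : ∀ x y, G.E x y → H.E (f.1 x) (g.1 y)) : XHomotopic f g := by
  refine ⟨1, ⟨fun p : G.V × Fin 2 => if p.2 = 0 then f.1 p.1 else g.1 p.1, ?_⟩, fun x => ⟨rfl, rfl⟩⟩
  rintro ⟨x, t⟩ ⟨y, u⟩ ⟨hxy, -⟩
  dsimp only
  split_ifs
  · exact f.2 hxy
  · exact hfg x y hxy
  · exact H.symm (hfg y x (G.symm hxy))
  · exact g.2 hxy

section K2Tensor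

variable {G H L : XGraph}

def XGraph.k2TensorHom (f₀ f₁ : G.V → H.V) (hf : ∀ x y, G.E x y → H.E (f₀ x) (f₁ y)) :
    (K2.tensor G).Hom (K2.tensor H) :=
  ⟨fun p : Fin 2 × G.V => (p.1, if p.1 = 0 then f₀ p.2 else f₁ p.2), by
    rintro ⟨i, x⟩ ⟨j, y⟩ ⟨hij, hxy⟩
    refine ⟨hij, ?_⟩
    change Fin 2 at i j
    fin_cases i <;> fin_cases j
    · exact absurd rfl hij
    · exact hf x y hxy
    · exact H.symm (hf y x (G.symm hxy))
    · exact absurd rfl hij⟩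

theorem XGraph.k2TensorHom_comp (f₀ f₁ : G.V → H.V) (g₀ g₁ : H.V → L.V)
    (hf : ∀ x y, G.E x y → H.E (f₀ x) (f₁ y)) (hg : ∀ x y, H.E x y → L.E (g₀ x) (g₁ y)) :
    (XGraph.k2TensorHom g₀ g₁ hg).comp (XGraph.k2TensorHom f₀ f₁ hf) =
      XGraph.k2TensorHom (g₀ ∘ f₀) (g₁ ∘ f₁) (fun x y hxy => hg _ _ (hf x y hxy)) := by
  refine Subtype.ext (funext fun ⟨i, x⟩ => ?_)
  change Fin 2 at i
  fin_cases i <;> rfl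

theorem XGraph.xHomotopic_k2TensorHom_id (f₀ f₁ : G.V → G.V)
    (hf : ∀ x y, G.E x y → G.E (f₀ x) (f₁ y))
    (h₀ : ∀ x y, G.E x y → G.E (f₀ x) y) (h₁ : ∀ x y, G.E x y → G.E (f₁ x) y) :
    XHomotopic (XGraph.k2TensorHom f₀ f₁ hf) (XGraph.Hom.id _) := by
  refine XHomotopic.of_adj _ _ ?_
  rintro ⟨i, x⟩ ⟨j, y⟩ ⟨hij, hxy⟩
  refine ⟨hij, ?_⟩
  change Fin 2 at i
  fin_cases i
  · exact h₀ x y hxy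
  · exact h₁ x y hxy

/-- The sheet-`1` composite needs no hypothesis of its own: `g₁ (f₁ x)` is adjacent to
`g₀ (f₀ y) = y` for every neighbour `y` of `x`. -/
theorem XGraph.isXHtpyEquiv_k2TensorHom {f₀ f₁ : G.V → H.V} {g₀ g₁ : H.V → G.V}
    (hf : ∀ x y, G.E x y → H.E (f₀ x) (f₁ y)) (hg : ∀ x y, H.E x y → G.E (g₀ x) (g₁ y))
    (hgf : ∀ x, (∃ y, G.E x y) → g₀ (f₀ x) = x) (hfg : ∀ x, (∃ y, H.E x y) → f₀ (g₀ x) = x) :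
    IsXHtpyEquiv (XGraph.k2TensorHom f₀ f₁ hf) := by
  refine ⟨XGraph.k2TensorHom g₀ g₁ hg, ?_, ?_⟩
  · rw [XGraph.k2TensorHom_comp]
    refine XGraph.xHomotopic_k2TensorHom_id _ _ _ (fun x y hxy => ?_) (fun x y hxy => ?_)
    · rw [Function.comp_apply, hgf x ⟨y, hxy⟩]
      exact hxy
    · have := hg _ _ (hf y x (G.symm hxy))
      rw [hgf y ⟨x, G.symm hxy⟩] at this
      exact G.symm this
  · rw [XGraph.k2TensorHom_comp]
    refine XGraph.xHomotopic_k2TensorHom_id _ _ _ (fun x y hxy => ?_) (fun x y hxy => ?_)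
    · rw [Function.comp_apply, hfg x ⟨y, hxy⟩]
      exact hxy
    · have := hf _ _ (hg y x (H.symm hxy))
      rw [hfg y ⟨x, H.symm hxy⟩] at this
      exact H.symm this

end K2Tensor

theorem SComplex.S_map_symm {A B : SComplex} {e : A.V ≃ B.V}
    (he : ∀ s : Finset A.V, A.S s ↔ B.S (s.map e.toEmbedding)) (s : Finset B.V) (hs : B.S s) :
    A.S (s.map e.symm.toEmbedding) := by
  rw [he, Finset.map_map]
  simpa using hs

namespace XGraph

variable {G H : XGraph}

theorem NC.exists_S_neighborhood (hG : ∀ x : G.V, {y | G.E x y}.Finite) {x : G.V}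
    (hx : ∃ y, G.E x y) : ∃ s : Finset G.NC.V, G.NC.S s ∧ ∀ z : G.NC.V, z ∈ s ↔ G.E x z.1 := by
  have hfin : {z : G.NC.V | G.E x z.1}.Finite :=
    (hG x).preimage Subtype.val_injective.injOn
  obtain ⟨y, hxy⟩ := hx
  refine ⟨hfin.toFinset, ⟨⟨⟨y, x, G.symm hxy⟩, hfin.mem_toFinset.2 hxy⟩, x, ?_⟩, ?_⟩
  · exact fun z hz => hfin.mem_toFinset.1 hz
  · exact fun z => hfin.mem_toFinset

open Classical in
noncomputable def NC.extend [Nonempty H.V] (e : G.NC.V → H.NC.V) (x : G.V) : H.V :=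
  if hx : ∃ y, G.E x y then (e ⟨x, hx⟩).1 else Classical.arbitrary _

theorem NC.extend_of_exists_adj [Nonempty H.V] (e : G.NC.V → H.NC.V) {x : G.V}
    (hx : ∃ y, G.E x y) : NC.extend e x = (e ⟨x, hx⟩).1 :=
  dif_pos hx

theorem NC.extend_symm_extend [Nonempty G.V] [Nonempty H.V] (e : G.NC.V ≃ H.NC.V) {x : G.V}
    (hx : ∃ y, G.E x y) : NC.extend e.symm (NC.extend e x) = x := by
  rw [NC.extend_of_exists_adj e hx, NC.extend_of_exists_adj e.symm (e ⟨x, hx⟩).2]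
  exact congrArg Subtype.val (e.symm_apply_apply ⟨x, hx⟩)

/-- The neighbourhood of `y` is a finite simplex of `N(G)`, so its image lies in the
neighbourhood of some vertex of `H`; that vertex is the value at `y`. -/
theorem NC.exists_adj_extend [Nonempty H.V] (hG : ∀ x : G.V, {y | G.E x y}.Finite)
    (e : G.NC.V ≃ H.NC.V) (he : ∀ s : Finset G.NC.V, G.NC.S s → H.NC.S (s.map e.toEmbedding)) :
    ∃ f₁ : G.V → H.V, ∀ x y, G.E x y → H.E (NC.extend e x) (f₁ y) := by
  have hw : ∀ y : G.V, ∃ w : H.V, ∀ x, G.E y x → H.E w (NC.extend e x) := by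
    intro y
    by_cases hy : ∃ x, G.E y x
    · obtain ⟨s, hs, hmem⟩ := NC.exists_S_neighborhood hG hy
      obtain ⟨-, w, hsw⟩ := he s hs
      refine ⟨w, fun x hyx => ?_⟩
      rw [NC.extend_of_exists_adj e ⟨y, G.symm hyx⟩]
      exact hsw _ (Finset.mem_map_of_mem _ ((hmem ⟨x, y, G.symm hyx⟩).2 hyx))
    · exact ⟨Classical.arbitrary _, fun x hyx => absurd ⟨x, hyx⟩ hy⟩
  choose f₁ hf₁ using hw
  exact ⟨f₁, fun x y hxy => H.symm (hf₁ y x (G.symm hxy))⟩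

end XGraph

/-- if `G`, `H` are non-empty locally finite graphs with `N(G) ≅ N(H)`,
then there is a ×-homotopy equivalence `K₂ × G → K₂ × H`. -/
theorem xhtpy_equiv_of_NC_iso (G H : XGraph)
    (hGne : Nonempty G.V) (hHne : Nonempty H.V)
    (hGlf : ∀ x : G.V, {y | G.E x y}.Finite) (hHlf : ∀ x : H.V, {y | H.E x y}.Finite)
    (h : G.NC.Iso H.NC) :
    ∃ F : (K2.tensor G).Hom (K2.tensor H), IsXHtpyEquiv F := by
  obtain ⟨e, he⟩ := h
  obtain ⟨f₁, hf⟩ := XGraph.NC.exists_adj_extend hGlf e fun s => (he s).1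
  obtain ⟨g₁, hg⟩ := XGraph.NC.exists_adj_extend hHlf e.symm (SComplex.S_map_symm he)
  refine ⟨_, XGraph.isXHtpyEquiv_k2TensorHom hf hg (fun x hx => ?_) (fun x hx => ?_)⟩
  · exact XGraph.NC.extend_symm_extend e hx
  · simpa using XGraph.NC.extend_symm_extend e.symm hx
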